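/- arXiv:0802.1495 — 5 statements merged into one kernel-verified Lean document; each statement's English description precedes it below -/
import Mathlib

section
/- Let p be a prime with p ≡ 1 (mod 4) and let s₁, s₂, s₃ be odd integers with |sᵢ| ≤ p−2. Then there exist an odd integer k and even integers l₁, l₂, l₃ such that k² + Σᵢ(k·sᵢ − lᵢ·p)² < 2p². -/
/-- The "balanced" residue of `x` modulo `2P`, lying in `[-P, P)`. -/
def Rm (P x : ℤ) : ℤ := x - 2 * P * ((x + P) / (2 * P))

lemma Rm_add_eq_emod (P x : ℤ) : Rm P x + P = (x + P) % (2 * P) := by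
  have h := Int.mul_ediv_add_emod (x + P) (2 * P)
  unfold Rm
  linarith

lemma Rm_lb {P : ℤ} (hP : 0 < P) (x : ℤ) : -P ≤ Rm P x := by
  have h := Int.emod_nonneg (x + P) (by positivity : (2 * P) ≠ 0)
  have h2 := Rm_add_eq_emod P x
  linarith

lemma Rm_ub {P : ℤ} (hP : 0 < P) (x : ℤ) : Rm P x < P := by
  have h := Int.emod_lt_of_pos (x + P) (by positivity : 0 < 2 * P)
  have h2 := Rm_add_eq_emod P x
  linarith

lemma Rm_dvd (P x : ℤ) : 2 * P ∣ x - Rm P x :=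
  ⟨(x + P) / (2 * P), by unfold Rm; ring⟩

lemma Rm_odd (P : ℤ) {x : ℤ} (hx : Odd x) : Odd (Rm P x) := by
  obtain ⟨q, hq⟩ := Rm_dvd P x
  obtain ⟨t, ht⟩ := hx
  exact ⟨t - P * q, by linarith⟩

lemma sum_odd_sq (n : ℕ) :
    3 * ∑ a ∈ Finset.range n, (2 * (a : ℤ) + 1) ^ 2 = 4 * (n : ℤ) ^ 3 - n := by
  induction n with
  | zero => simp
  | succ m ih =>
    rw [Finset.sum_range_succ]
    push_cast
    linear_combination ih

lemma aux_sum (p n : ℕ) (hp : p.Prime) (hpn : (p : ℤ) = 2 * n + 1)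
    (s : ℤ) (hs : Odd s) (hb : |s| ≤ (p : ℤ) - 2) :
    ∑ a ∈ Finset.range n, (Rm p ((2 * (a : ℤ) + 1) * s)) ^ 2
      = ∑ a ∈ Finset.range n, (2 * (a : ℤ) + 1) ^ 2 := by
  have hP0 : (0 : ℤ) < (p : ℤ) := by exact_mod_cast hp.pos
  have hPprime : Prime ((p : ℤ)) := Nat.prime_iff_prime_int.mp hp
  have hs0 : s ≠ 0 := by
    rintro rfl
    simp [Int.not_odd_iff_even.mpr Even.zero] at hs
  have hnds : ¬ ((p : ℤ) ∣ s) := by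
    intro h
    exact hs0 (Int.eq_zero_of_abs_lt_dvd h (by linarith))
  set F : ℕ → ℤ := fun a => |Rm p ((2 * (a : ℤ) + 1) * s)| with hF
  have hmain : ∀ a, a < n → Odd (F a) ∧ 1 ≤ F a ∧ F a ≤ (p : ℤ) - 2 := by
    intro a ha
    have hkodd : Odd (2 * (a : ℤ) + 1) := ⟨a, by ring⟩
    have hxodd : Odd ((2 * (a : ℤ) + 1) * s) := hkodd.mul hs
    have hrodd : Odd (Rm p ((2 * (a : ℤ) + 1) * s)) := Rm_odd _ hxodd
    have hFodd : Odd (F a) := odd_abs.mpr hrodd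
    have hlb := Rm_lb hP0 ((2 * (a : ℤ) + 1) * s)
    have hub := Rm_ub hP0 ((2 * (a : ℤ) + 1) * s)
    have hne : Rm (p : ℤ) ((2 * (a : ℤ) + 1) * s) ≠ -(p : ℤ) := by
      intro h
      obtain ⟨c, hc⟩ := Rm_dvd (p : ℤ) ((2 * (a : ℤ) + 1) * s)
      rw [h] at hc
      have hdvd : (p : ℤ) ∣ (2 * (a : ℤ) + 1) * s := ⟨2 * c - 1, by linarith⟩
      rcases hPprime.dvd_mul.mp hdvd with h1 | h1
      · have h0 : (2 * (a : ℤ) + 1) = 0 := by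
          refine Int.eq_zero_of_abs_lt_dvd h1 ?_
          rw [abs_of_nonneg (by positivity)]
          omega
        omega
      · exact hnds h1
    obtain ⟨t, ht⟩ := hFodd
    have habs1 : F a ≤ (p : ℤ) := abs_le.mpr ⟨by linarith, by linarith⟩
    have habsne : F a ≠ (p : ℤ) := by
      intro h
      rcases (abs_eq (le_of_lt hP0)).mp h with h1 | h1
      · linarith
      · exact hne h1
    have h0 := abs_nonneg (Rm (p : ℤ) ((2 * (a : ℤ) + 1) * s))
    refine ⟨⟨t, ht⟩, ?_, ?_⟩
    · simp only [hF] at ht ⊢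
      omega
    · simp only [hF] at ht habs1 habsne ⊢
      omega
  have hinj : ∀ a ∈ Finset.range n, ∀ b ∈ Finset.range n, F a = F b → a = b := by
    intro a ha b hb h
    rw [Finset.mem_range] at ha hb
    obtain ⟨c1, hc1⟩ := Rm_dvd (p : ℤ) ((2 * (a : ℤ) + 1) * s)
    obtain ⟨c2, hc2⟩ := Rm_dvd (p : ℤ) ((2 * (b : ℤ) + 1) * s)
    rcases abs_eq_abs.mp h with h' | h'
    · have hq2 : 2 * (((a : ℤ) - b) * s) = 2 * ((p : ℤ) * (c1 - c2)) := by
        linear_combination hc1 - hc2 + h'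
      have hq := mul_left_cancel₀ (two_ne_zero) hq2
      have hdvd : (p : ℤ) ∣ ((a : ℤ) - b) * s := ⟨c1 - c2, hq⟩
      rcases hPprime.dvd_mul.mp hdvd with h1 | h1
      · have h0 : (a : ℤ) - b = 0 := by
          refine Int.eq_zero_of_abs_lt_dvd h1 (abs_lt.mpr ⟨by omega, by omega⟩)
        omega
      · exact absurd h1 hnds
    · have hq2 : 2 * (((a : ℤ) + b + 1) * s) = 2 * ((p : ℤ) * (c1 + c2)) := by
        linear_combination hc1 + hc2 + h'
      have hq := mul_left_cancel₀ (two_ne_zero) hq2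
      have hdvd : (p : ℤ) ∣ ((a : ℤ) + b + 1) * s := ⟨c1 + c2, hq⟩
      rcases hPprime.dvd_mul.mp hdvd with h1 | h1
      · have h0 : (a : ℤ) + b + 1 = 0 := by
          refine Int.eq_zero_of_abs_lt_dvd h1 ?_
          rw [abs_of_nonneg (by positivity)]
          omega
        omega
      · exact absurd h1 hnds
  have hinj2 : Function.Injective (fun b : ℕ => 2 * (b : ℤ) + 1) := by
    intro x y h
    simp only at h
    omega
  set O : Finset ℤ := (Finset.range n).image (fun b : ℕ => 2 * (b : ℤ) + 1) with hO
  have hsub : (Finset.range n).image F ⊆ O := by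
    intro y hy
    rw [Finset.mem_image] at hy
    obtain ⟨a, ha, rfl⟩ := hy
    rw [Finset.mem_range] at ha
    obtain ⟨⟨t, ht⟩, h1, h2⟩ := hmain a ha
    rw [hO, Finset.mem_image]
    refine ⟨t.toNat, Finset.mem_range.mpr ?_, ?_⟩
    · omega
    · rw [Int.toNat_of_nonneg (by omega : (0 : ℤ) ≤ t)]
      omega
  have hcard : O.card ≤ ((Finset.range n).image F).card := by
    have h1 : O.card = n := by
      rw [hO, Finset.card_image_of_injective _ hinj2, Finset.card_range]
    have h2 : ((Finset.range n).image F).card = n := by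
      rw [Finset.card_image_of_injOn (fun a ha b hb h => hinj a ha b hb h), Finset.card_range]
    omega
  have himg : (Finset.range n).image F = O := Finset.eq_of_subset_of_card_le hsub hcard
  calc ∑ a ∈ Finset.range n, (Rm p ((2 * (a : ℤ) + 1) * s)) ^ 2
      = ∑ a ∈ Finset.range n, (F a) ^ 2 := by simp [hF, sq_abs]
    _ = ∑ y ∈ (Finset.range n).image F, y ^ 2 := by rw [Finset.sum_image hinj]
    _ = ∑ y ∈ O, y ^ 2 := by rw [himg]
    _ = ∑ b ∈ Finset.range n, (2 * (b : ℤ) + 1) ^ 2 := by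
        rw [hO, Finset.sum_image (fun a _ b _ h => hinj2 h)]

theorem stmt_0 (p : ℕ) (hp : p.Prime) (hp4 : p % 4 = 1)
    (s₁ s₂ s₃ : ℤ) (hs₁ : Odd s₁) (hs₂ : Odd s₂) (hs₃ : Odd s₃)
    (hb₁ : |s₁| ≤ (p : ℤ) - 2) (hb₂ : |s₂| ≤ (p : ℤ) - 2) (hb₃ : |s₃| ≤ (p : ℤ) - 2) :
    ∃ k l₁ l₂ l₃ : ℤ, Odd k ∧ Even l₁ ∧ Even l₂ ∧ Even l₃ ∧
      k ^ 2 + (k * s₁ - l₁ * p) ^ 2 + (k * s₂ - l₂ * p) ^ 2 + (k * s₃ - l₃ * p) ^ 2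
        < 2 * (p : ℤ) ^ 2 := by
  by_contra hcon
  push_neg at hcon
  have hp2 := hp.two_le
  have hp5 : 5 ≤ p := by omega
  set n : ℕ := p / 2 with hn
  have hpn : (p : ℤ) = 2 * n + 1 := by
    have hmod : p = 2 * n + 1 := by omega
    exact_mod_cast congrArg (Nat.cast : ℕ → ℤ) hmod
  have hn2 : 2 ≤ n := by omega
  have hlow : ∀ a ∈ Finset.range n,
      2 * (p : ℤ) ^ 2 ≤ (2 * (a : ℤ) + 1) ^ 2
        + (Rm p ((2 * (a : ℤ) + 1) * s₁)) ^ 2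
        + (Rm p ((2 * (a : ℤ) + 1) * s₂)) ^ 2
        + (Rm p ((2 * (a : ℤ) + 1) * s₃)) ^ 2 := by
    intro a _
    set k : ℤ := 2 * (a : ℤ) + 1 with hk
    have hkodd : Odd k := ⟨a, hk⟩
    set q₁ : ℤ := (k * s₁ + (p : ℤ)) / (2 * (p : ℤ)) with hq1
    set q₂ : ℤ := (k * s₂ + (p : ℤ)) / (2 * (p : ℤ)) with hq2
    set q₃ : ℤ := (k * s₃ + (p : ℤ)) / (2 * (p : ℤ)) with hq3
    have e1 : k * s₁ - (2 * q₁) * (p : ℤ) = Rm p (k * s₁) := by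
      rw [hq1]; unfold Rm; ring
    have e2 : k * s₂ - (2 * q₂) * (p : ℤ) = Rm p (k * s₂) := by
      rw [hq2]; unfold Rm; ring
    have e3 : k * s₃ - (2 * q₃) * (p : ℤ) = Rm p (k * s₃) := by
      rw [hq3]; unfold Rm; ring
    have h := hcon k (2 * q₁) (2 * q₂) (2 * q₃) hkodd ⟨q₁, by ring⟩ ⟨q₂, by ring⟩ ⟨q₃, by ring⟩
    rw [e1, e2, e3] at h
    exact h
  have hsum := Finset.sum_le_sum hlow
  rw [Finset.sum_const, Finset.card_range, nsmul_eq_mul] at hsum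
  have hsplit : ∑ a ∈ Finset.range n, ((2 * (a : ℤ) + 1) ^ 2
        + (Rm p ((2 * (a : ℤ) + 1) * s₁)) ^ 2
        + (Rm p ((2 * (a : ℤ) + 1) * s₂)) ^ 2
        + (Rm p ((2 * (a : ℤ) + 1) * s₃)) ^ 2)
      = 4 * ∑ a ∈ Finset.range n, (2 * (a : ℤ) + 1) ^ 2 := by
    rw [Finset.sum_add_distrib, Finset.sum_add_distrib, Finset.sum_add_distrib,
      aux_sum p n hp hpn s₁ hs₁ hb₁, aux_sum p n hp hpn s₂ hs₂ hb₂,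
      aux_sum p n hp hpn s₃ hs₃ hb₃]
    ring
  rw [hsplit] at hsum
  have hS := sum_odd_sq n
  have hn2z : (2 : ℤ) ≤ (n : ℤ) := by exact_mod_cast hn2
  rw [hpn] at hsum
  have hn0 : (0 : ℤ) ≤ (n : ℤ) := by linarith
  nlinarith [hsum, hS, hn2z, mul_nonneg hn0 hn0, mul_nonneg (mul_nonneg hn0 hn0) hn0]
end

section
/- Let q be a prime with q ≡ 3 (mod 4), let s₁,…,s₅ and t₆ be odd integers and t₁,…,t₅ even integers, all in [1−q, q−1]. Then there exist odd integers k₁, k₂ and even integers l₁,…,l₆ such that k₁² + k₂² + Σᵢ₌₁⁵ (k₁sᵢ + k₂tᵢ − lᵢq)² + (k₂t₆ − l₆q)² < 4q². -/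
/-- representative of `x` mod `2q` lying in `[1-q, q]`. -/
def Rq (q : ℕ) (x : ℤ) : ℤ := (x + q - 1) % (2 * q) - (q - 1)

/-- the odd integers in `(-q, q]` (for odd `q`). -/
def Kq (q : ℕ) : Finset ℤ := (Finset.range q).image (fun j : ℕ => 2 * (j : ℤ) + 2 - q)

lemma Rq_sub (q : ℕ) (x : ℤ) : x - Rq q x = 2 * q * ((x + q - 1) / (2 * q)) := by
  have h := Int.emod_add_mul_ediv (x + q - 1) (2 * (q:ℤ))
  unfold Rq
  linarith

lemma Rq_bounds (q : ℕ) (hq : 0 < q) (x : ℤ) : 1 - q ≤ Rq q x ∧ Rq q x ≤ q := by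
  have h1 : 0 ≤ (x + q - 1) % (2 * (q:ℤ)) := Int.emod_nonneg _ (by positivity)
  have h2 : (x + q - 1) % (2 * (q:ℤ)) < 2 * q := Int.emod_lt_of_pos _ (by positivity)
  unfold Rq
  constructor <;> omega

lemma Rq_odd (q : ℕ) (x : ℤ) (hx : Odd x) : Odd (Rq q x) := by
  have h := Rq_sub q x
  obtain ⟨a, ha⟩ := hx
  exact ⟨a - q * ((x + q - 1) / (2 * q)), by linarith⟩

lemma mem_Kq_iff (q : ℕ) (hq1 : q % 2 = 1) (y : ℤ) :
    y ∈ Kq q ↔ Odd y ∧ 1 - q ≤ y ∧ y ≤ q := by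
  obtain ⟨b, hb⟩ : ∃ b, q = 2 * b + 1 := ⟨q / 2, by omega⟩
  constructor
  · rintro hy
    obtain ⟨j, hj, rfl⟩ := Finset.mem_image.mp hy
    rw [Finset.mem_range] at hj
    refine ⟨⟨(j:ℤ) - b, by push_cast [hb]; ring⟩, by omega, by omega⟩
  · rintro ⟨⟨a, ha⟩, h1, h2⟩
    refine Finset.mem_image.mpr ⟨(a + b).toNat, Finset.mem_range.mpr ?_, ?_⟩ <;> omega

lemma Kq_card (q : ℕ) : (Kq q).card = q := by
  rw [Kq, Finset.card_image_of_injOn (fun a _ b _ h => by omega), Finset.card_range]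

lemma Rq_mem (q : ℕ) (hq1 : q % 2 = 1) (x : ℤ) (hx : Odd x) : Rq q x ∈ Kq q := by
  rw [mem_Kq_iff q hq1]
  obtain ⟨hb1, hb2⟩ := Rq_bounds q (by omega) x
  exact ⟨Rq_odd q x hx, hb1, hb2⟩

lemma key_sum (q : ℕ) (hq : q.Prime) (hq1 : q % 2 = 1) (s c : ℤ) (hs : Odd s)
    (hb : s.natAbs < q) (hc : Even c) :
    ∑ k ∈ Kq q, (Rq q (k * s + c)) ^ 2 = ∑ k ∈ Kq q, k ^ 2 := by
  have hinj : ∀ x ∈ Kq q, ∀ y ∈ Kq q, Rq q (x * s + c) = Rq q (y * s + c) → x = y := by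
    intro x hx y hy hxy
    obtain ⟨hxo, hx1, hx2⟩ := (mem_Kq_iff q hq1 x).1 hx
    obtain ⟨hyo, hy1, hy2⟩ := (mem_Kq_iff q hq1 y).1 hy
    have h1 := Rq_sub q (x * s + c)
    have h2 := Rq_sub q (y * s + c)
    have hdvd : (2 * (q:ℤ)) ∣ (x - y) * s :=
      ⟨(x * s + c + q - 1) / (2 * q) - (y * s + c + q - 1) / (2 * q), by
        rw [hxy] at h1; linear_combination h1 - h2⟩
    have hq' : Prime (q:ℤ) := Nat.prime_iff_prime_int.1 hq
    have hs0 : s ≠ 0 := by rintro rfl; exact (by simpa using hs : False)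
    have hqns : ¬ (q:ℤ) ∣ s := by
      intro hd
      have hd' : q ∣ s.natAbs := by
        have := Int.natAbs_dvd_natAbs.mpr hd
        simpa using this
      have := Nat.le_of_dvd (Int.natAbs_pos.mpr hs0) hd'
      omega
    have hqd : (q:ℤ) ∣ (x - y) := by
      rcases (hq'.dvd_mul).mp (dvd_trans ⟨2, by ring⟩ hdvd) with h | h
      · exact h
      · exact absurd h hqns
    have h2d : (2:ℤ) ∣ (x - y) := (hxo.sub_odd hyo).two_dvd
    have hco : IsCoprime (2:ℤ) (q:ℤ) := by
      rw [Int.isCoprime_iff_gcd_eq_one]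
      have : Nat.gcd 2 q = 1 := Nat.Coprime.gcd_eq_one (Nat.coprime_two_left.mpr (Nat.odd_iff.mpr hq1))
      simpa [Int.gcd] using this
    have hfull : (2 * (q:ℤ)) ∣ (x - y) := hco.mul_dvd h2d hqd
    by_contra hne
    have hxy0 : x - y ≠ 0 := fun h => hne (by linarith [sub_eq_zero.mp h])
    have := Int.le_of_dvd (abs_pos.mpr hxy0) ((dvd_abs _ _).mpr hfull)
    have habs : |x - y| ≤ 2 * q - 1 := abs_le.mpr ⟨by linarith, by linarith⟩
    linarith
  have hsub : (Kq q).image (fun k => Rq q (k * s + c)) ⊆ Kq q := by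
    intro y hy
    obtain ⟨k, hk, rfl⟩ := Finset.mem_image.mp hy
    obtain ⟨hko, _, _⟩ := (mem_Kq_iff q hq1 k).1 hk
    have hodd : Odd (k * s + c) := by
      rcases hko with ⟨a, ha⟩; rcases hs with ⟨b, hb'⟩; rcases hc with ⟨d, hd⟩
      exact ⟨2*a*b + a + b + d, by rw [ha, hb', hd]; ring⟩
    exact Rq_mem q hq1 _ hodd
  have himg : (Kq q).image (fun k => Rq q (k * s + c)) = Kq q := by
    apply Finset.eq_of_subset_of_card_le hsub
    rw [Finset.card_image_of_injOn hinj]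
  have h := Finset.sum_image (f := fun y : ℤ => y ^ 2) (g := fun k => Rq q (k * s + c)) hinj
  rw [himg] at h
  exact h.symm

lemma aux_sq (c : ℤ) : ∀ n : ℕ, 3 * ∑ j ∈ Finset.range n, (2 * (j:ℤ) + c) ^ 2
    = 4 * n ^ 3 - 6 * n ^ 2 + 2 * n + 6 * c * n ^ 2 - 6 * c * n + 3 * n * c ^ 2 := by
  intro n
  induction n with
  | zero => simp
  | succ m ih =>
    rw [Finset.sum_range_succ]
    push_cast
    linear_combination ih

lemma sum_Kq_sq (q : ℕ) : 3 * ∑ k ∈ Kq q, k ^ 2 = (q:ℤ) ^ 3 + 2 * q := by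
  rw [Kq, Finset.sum_image (fun a _ b _ h => by omega)]
  have := aux_sq (2 - (q:ℤ)) q
  have h2 : ∀ j ∈ Finset.range q, (2 * (j:ℤ) + 2 - q) ^ 2 = (2 * (j:ℤ) + (2 - q)) ^ 2 :=
    fun j _ => by ring
  rw [Finset.sum_congr rfl h2]
  linear_combination this

theorem stmt_2 (q : ℕ) (hq : q.Prime) (hq4 : q % 4 = 3)
    (s t : Fin 5 → ℤ) (t₆ : ℤ)
    (hs : ∀ i, Odd (s i)) (ht : ∀ i, Even (t i)) (ht₆ : Odd t₆)
    (hsb : ∀ i, 1 - (q : ℤ) ≤ s i ∧ s i ≤ (q : ℤ) - 1)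
    (htb : ∀ i, 1 - (q : ℤ) ≤ t i ∧ t i ≤ (q : ℤ) - 1)
    (ht₆b : 1 - (q : ℤ) ≤ t₆ ∧ t₆ ≤ (q : ℤ) - 1) :
    ∃ k₁ k₂ : ℤ, ∃ l : Fin 5 → ℤ, ∃ l₆ : ℤ, Odd k₁ ∧ Odd k₂ ∧ (∀ i, Even (l i)) ∧ Even l₆ ∧
      k₁ ^ 2 + k₂ ^ 2 + (∑ i, (k₁ * s i + k₂ * t i - l i * q) ^ 2)
        + (k₂ * t₆ - l₆ * q) ^ 2 < 4 * (q : ℤ) ^ 2 := by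
  have hq1 : q % 2 = 1 := by omega
  have hq3 : 3 ≤ q := by omega
  set K := Kq q with hK
  set A : ℤ := ∑ k ∈ K, k ^ 2 with hAdef
  have hcard : K.card = q := Kq_card q
  have hkey : ∀ s' c : ℤ, Odd s' → s'.natAbs < q → Even c →
      ∑ k ∈ K, (Rq q (k * s' + c)) ^ 2 = A := fun s' c h1 h2 h3 =>
    key_sum q hq hq1 s' c h1 h2 h3
  have hsna : ∀ i, (s i).natAbs < q := fun i => by have := hsb i; omega
  have ht₆na : t₆.natAbs < q := by omega
  have hinner : ∀ y ∈ K, ∑ x ∈ K,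
      (x ^ 2 + y ^ 2 + (∑ i, (Rq q (x * s i + y * t i)) ^ 2) + (Rq q (y * t₆)) ^ 2)
      = 6 * A + q * y ^ 2 + q * (Rq q (y * t₆)) ^ 2 := by
    intro y hy
    calc ∑ x ∈ K, (x ^ 2 + y ^ 2 + (∑ i, (Rq q (x * s i + y * t i)) ^ 2)
            + (Rq q (y * t₆)) ^ 2)
        = (∑ x ∈ K, x ^ 2) + (∑ x ∈ K, y ^ 2)
          + (∑ x ∈ K, ∑ i, (Rq q (x * s i + y * t i)) ^ 2)
          + (∑ x ∈ K, (Rq q (y * t₆)) ^ 2) := by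
          rw [Finset.sum_add_distrib, Finset.sum_add_distrib, Finset.sum_add_distrib]
      _ = A + (q : ℤ) * y ^ 2 + (∑ i : Fin 5, ∑ x ∈ K, (Rq q (x * s i + y * t i)) ^ 2)
          + (q : ℤ) * (Rq q (y * t₆)) ^ 2 := by
          rw [Finset.sum_const, Finset.sum_const, hcard, Finset.sum_comm,
            nsmul_eq_mul, nsmul_eq_mul]
      _ = A + (q : ℤ) * y ^ 2 + (∑ _i : Fin 5, A) + (q : ℤ) * (Rq q (y * t₆)) ^ 2 := by
          congr 2
          exact Finset.sum_congr rfl fun i _ =>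
            hkey (s i) (y * t i) (hs i) (hsna i) ((ht i).mul_left y)
      _ = 6 * A + q * y ^ 2 + q * (Rq q (y * t₆)) ^ 2 := by
          rw [Finset.sum_const]
          simp
          ring
  have hkey6 : ∑ k ∈ K, (Rq q (k * t₆)) ^ 2 = A := by
    have := hkey t₆ 0 ht₆ ht₆na Even.zero
    simpa using this
  have htot : ∑ p ∈ K ×ˢ K,
      (p.1 ^ 2 + p.2 ^ 2 + (∑ i, (Rq q (p.1 * s i + p.2 * t i)) ^ 2)
        + (Rq q (p.2 * t₆)) ^ 2) = 8 * q * A := by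
    rw [Finset.sum_product_right]
    rw [Finset.sum_congr rfl hinner]
    rw [Finset.sum_add_distrib, Finset.sum_add_distrib, Finset.sum_const, hcard,
      ← Finset.mul_sum, ← Finset.mul_sum, ← hAdef, hkey6, nsmul_eq_mul]
    ring
  have hAval : 3 * A = (q : ℤ) ^ 3 + 2 * q := sum_Kq_sq q
  have hQ3 : (3 : ℤ) ≤ (q : ℤ) := by exact_mod_cast hq3
  have hq2 : (9 : ℤ) ≤ (q : ℤ) ^ 2 := by nlinarith [hQ3]
  have hlt : ∑ p ∈ K ×ˢ K,
      (p.1 ^ 2 + p.2 ^ 2 + (∑ i, (Rq q (p.1 * s i + p.2 * t i)) ^ 2)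
        + (Rq q (p.2 * t₆)) ^ 2)
      < ∑ _p ∈ K ×ˢ K, 4 * (q : ℤ) ^ 2 := by
    rw [htot, Finset.sum_const, Finset.card_product, hcard, nsmul_eq_mul]
    push_cast
    have h8 : 24 * ((q : ℤ) * A) = 8 * (q:ℤ)^4 + 16 * (q:ℤ)^2 := by
      linear_combination 8 * (q : ℤ) * hAval
    have hv : 4 * (q : ℤ) ^ 2 ≤ (q : ℤ) ^ 4 := by nlinarith [hq2, sq_nonneg ((q:ℤ))]
    nlinarith [h8, hv, hq2]
  obtain ⟨p, hp, hplt⟩ := Finset.exists_lt_of_sum_lt hlt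
  obtain ⟨hp1, hp2⟩ := Finset.mem_product.mp hp
  have hterm : ∀ x : ℤ, x - 2 * ((x + q - 1) / (2 * q)) * q = Rq q x := by
    intro x; have := Rq_sub q x; linarith
  refine ⟨p.1, p.2, fun i => 2 * ((p.1 * s i + p.2 * t i + q - 1) / (2 * q)),
      2 * ((p.2 * t₆ + q - 1) / (2 * q)), ?_, ?_, ?_, ?_, ?_⟩
  · exact ((mem_Kq_iff q hq1 _).1 hp1).1
  · exact ((mem_Kq_iff q hq1 _).1 hp2).1
  · exact fun i => ⟨_, two_mul _⟩
  · exact ⟨_, two_mul _⟩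
  · simp only [hterm]
    exact hplt
end

section
/- Let p be a prime with p ≡ 1 (mod 4), let s be an odd integer with |s| ≤ p−2, and let K = {2−p, 4−p, …, p−2} (integers of the form 2j−p, 1 ≤ j ≤ p−1, i.e., the even-offset residues). Define K_s = {k ∈ K : there exists an even integer l with |k·s − l·p| < (p−1)/2}. Then |K_s| = (p−1)/2. -/
/-!
Write `p = 4u + 1`. The set `K` is the set of odd integers in `(-p, p)`, i.e. of the balanced
residues modulo `2p` that are odd and different from `p ≡ -p`. An even `l` with
`|ks - lp| < 2u` exists exactly when the balanced residue of `ks` modulo `2p` has absolute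
value `< 2u`. Since `s` is odd and prime to `p`, `k ↦ ks mod 2p` permutes `K`, so `|K_s|` is
the number of odd integers in `(-2u, 2u)`, which is `2u = (p - 1)/2`.
-/

/-- For odd `n`, the odd integers in `(-n, n)` (see `mem_oddIoo`); for `n = p` this is `K`. -/
def oddIoo (n : ℕ) : Finset ℤ :=
  (Finset.range (n - 1)).image (fun j : ℕ => 2 * ((j : ℤ) + 1) - n)

theorem mem_oddIoo {n : ℕ} (hn : Odd n) {k : ℤ} :
    k ∈ oddIoo n ↔ Odd k ∧ -(n : ℤ) < k ∧ k < n := by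
  obtain ⟨m, rfl⟩ := hn
  simp only [oddIoo, Finset.mem_image, Finset.mem_range]
  constructor
  · rintro ⟨j, hj, rfl⟩
    exact ⟨⟨(j : ℤ) - m, by push_cast; ring⟩, by push_cast; omega, by push_cast; omega⟩
  · rintro ⟨⟨t, rfl⟩, hk₁, hk₂⟩
    exact ⟨(t + m).toNat, by push_cast at hk₁ hk₂; omega, by push_cast; omega⟩

theorem card_oddIoo (n : ℕ) : (oddIoo n).card = n - 1 := by
  rw [oddIoo, Finset.card_image_of_injective _ (fun i j hij => by simpa using hij),
    Finset.card_range]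

theorem filter_abs_lt_oddIoo {n m : ℕ} (hn : Odd n) (hm : 2 * m < n) :
    (oddIoo n).filter (fun k => |k| < 2 * (m : ℤ)) = oddIoo (2 * m + 1) := by
  ext k
  simp only [Finset.mem_filter, mem_oddIoo hn, mem_oddIoo (odd_two_mul_add_one m), abs_lt]
  constructor
  · rintro ⟨⟨hk, -⟩, hk₁, hk₂⟩
    push_cast
    exact ⟨hk, by omega, by omega⟩
  · rintro ⟨⟨t, rfl⟩, hk₁, hk₂⟩
    push_cast at hk₁ hk₂
    exact ⟨⟨⟨t, rfl⟩, by omega, by omega⟩, by omega, by omega⟩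

theorem Finset.card_filter_comp_eq_of_bijOn {α : Type*} {s : Finset α} {f : α → α}
    (hf : Set.BijOn f s s) (P : α → Prop) [DecidablePred P] :
    (s.filter (fun a => P (f a))).card = (s.filter P).card := by
  refine Finset.card_nbij f (fun a ha => ?_) (hf.injOn.mono fun a ha => ?_) (fun b hb => ?_)
  · simp only [Finset.coe_filter, Set.mem_ofPred_eq] at ha ⊢
    exact ⟨hf.mapsTo ha.1, ha.2⟩
  · exact (Finset.mem_filter.1 ha).1
  · simp only [Finset.coe_filter, Set.mem_ofPred_eq] at hb
    obtain ⟨a, ha, rfl⟩ := hf.surjOn hb.1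
    exact ⟨a, by simpa using ⟨ha, hb.2⟩, rfl⟩

theorem Int.exists_even_abs_sub_mul_lt_iff {n : ℕ} {c x : ℤ} (hc : c ≤ n) :
    (∃ l : ℤ, Even l ∧ |x - l * n| < c) ↔ |x.bmod (2 * n)| < c := by
  constructor
  · rintro ⟨l, ⟨t, rfl⟩, h⟩
    have hn : 0 < 2 * n := by have := abs_nonneg (x - (t + t) * n); omega
    rw [abs_lt] at h
    suffices x.bmod (2 * n) = x - (t + t) * n by rwa [this, abs_lt]
    rw [Int.bmod_eq_iff hn]
    push_cast
    exact ⟨by omega, by omega, ⟨-t, by ring⟩⟩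
  · intro h
    refine ⟨2 * x.bdiv (2 * n), even_two_mul _, ?_⟩
    have := Int.bmod_add_bdiv x (2 * n)
    push_cast at this
    rwa [show x - 2 * x.bdiv (2 * n) * n = x.bmod (2 * n) by linarith]

section mulMod

variable {n : ℕ} {s : ℤ}

theorem bmod_mul_mem_oddIoo (hn : Odd n) (hs : Odd s) (hsn : IsCoprime s n) {k : ℤ}
    (hk : k ∈ oddIoo n) : (k * s).bmod (2 * n) ∈ oddIoo n := by
  rw [mem_oddIoo hn] at hk ⊢
  obtain ⟨hk, hk₁, hk₂⟩ := hk
  have hn0 : 0 < 2 * n := by omega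
  have hdiv := Int.bmod_add_bdiv (k * s) (2 * n)
  have hlo := Int.le_bmod (x := k * s) hn0
  have hhi := Int.bmod_lt (x := k * s) hn0
  push_cast at hdiv hlo hhi
  refine ⟨?_, ?_, by omega⟩
  · rw [show (k * s).bmod (2 * n) = k * s - 2 * (n * (k * s).bdiv (2 * n)) by linarith]
    exact (hk.mul hs).sub_even (even_two_mul _)
  -- `-n` is excluded since `n ∣ k * s` would force `n ∣ k`, i.e. `k = 0`.
  by_contra! hle
  have hdvd : (n : ℤ) ∣ k * s := ⟨2 * (k * s).bdiv (2 * n) - 1, by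
    rw [show (k * s).bmod (2 * n) = -n by omega] at hdiv; linarith⟩
  have hk0 :=
    Int.eq_zero_of_abs_lt_dvd (hsn.symm.dvd_of_dvd_mul_right hdvd) (abs_lt.2 ⟨hk₁, hk₂⟩)
  exact Int.not_odd_zero (hk0 ▸ hk)

theorem injOn_bmod_mul_oddIoo (hn : Odd n) (hs : Odd s) (hsn : IsCoprime s n) :
    Set.InjOn (fun k : ℤ => (k * s).bmod (2 * n)) (oddIoo n) := by
  intro k₁ hk₁ k₂ hk₂ heq
  rw [Finset.mem_coe, mem_oddIoo hn] at hk₁ hk₂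
  have hdvd : ((2 * n : ℕ) : ℤ) ∣ (k₁ - k₂) * s := by
    rw [sub_mul, Int.dvd_iff_bmod_eq_zero, ← Int.bmod_eq_bmod_iff_bmod_sub_eq_zero]
    exact heq
  have hcop : IsCoprime ((2 * n : ℕ) : ℤ) s := by
    push_cast
    exact ((Int.isCoprime_two_right.2 hs).mul_right hsn).symm
  have h0 := Int.eq_zero_of_abs_lt_dvd (hcop.dvd_of_dvd_mul_right hdvd)
    (by push_cast; rw [abs_lt]; omega)
  exact sub_eq_zero.1 h0

theorem bijOn_bmod_mul_oddIoo (hn : Odd n) (hs : Odd s) (hsn : IsCoprime s n) :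
    Set.BijOn (fun k : ℤ => (k * s).bmod (2 * n)) (oddIoo n) (oddIoo n) :=
  ((oddIoo n).finite_toSet.injOn_iff_bijOn_of_mapsTo
    fun _ hk => bmod_mul_mem_oddIoo hn hs hsn hk).1 (injOn_bmod_mul_oddIoo hn hs hsn)

end mulMod

theorem Int.isCoprime_of_abs_lt_prime {p : ℕ} (hp : p.Prime) {s : ℤ} (hs : s ≠ 0)
    (hsp : |s| < p) : IsCoprime s p := by
  have hlt : s.natAbs < p := by rw [Int.abs_eq_natAbs] at hsp; omega
  exact Int.isCoprime_iff_gcd_eq_one.2 (Nat.coprime_of_lt_prime (by simpa using hs) hlt hp).symm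

open Classical in
theorem stmt_5 (p : ℕ) (hp : p.Prime) (hp4 : p % 4 = 1)
    (s : ℤ) (hs : Odd s) (hb : |s| ≤ (p : ℤ) - 2) :
    (((Finset.range (p - 1)).image (fun j : ℕ => 2 * ((j : ℤ) + 1) - p)).filter
        (fun k : ℤ => ∃ l : ℤ, Even l ∧ |k * s - l * p| < ((p : ℤ) - 1) / 2)).card
      = (p - 1) / 2 := by
  have hpodd : Odd p := hp.odd_of_ne_two (by omega)
  have hsp : IsCoprime s p :=
    Int.isCoprime_of_abs_lt_prime hp (by rintro rfl; exact Int.not_odd_zero hs) (by omega)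
  obtain ⟨u, hu⟩ : ∃ u, p = 4 * u + 1 := ⟨p / 4, by omega⟩
  have hhalf : ((p : ℤ) - 1) / 2 = 2 * (u : ℤ) := by omega
  change ((oddIoo p).filter _).card = _
  simp_rw [hhalf, Int.exists_even_abs_sub_mul_lt_iff (n := p) (c := 2 * (u : ℤ)) (by omega)]
  rw [Finset.card_filter_comp_eq_of_bijOn (bijOn_bmod_mul_oddIoo hpodd hs hsp)
    (fun r => |r| < 2 * (u : ℤ)), filter_abs_lt_oddIoo hpodd (by omega), card_oddIoo]
  omega
end

section
/- Let p be a prime and δ a positive integer, and let L be a sublattice of index p in the lattice Zⁿ⁻¹ ⊕ Z(δ) (the orthogonal sum of the standard rank n−1 lattice and a rank one lattice with a generator of square δ). Then either L is isomorphic to Zⁿ⁻¹ ⊕ Z(p²δ), or L admits a characteristic covector ξ with ξ² < n − 1. -/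
/-!
Write `L = B ℤⁿ` inside `ℤⁿ⁻¹ ⊕ ℤ(δ)`, whose basis `eᵢ` has `eᵢ² = dᵢ`. As `|det B| = p`, the
adjugate `C = adj Bᵀ` is not divisible by `p`, and every `v = C x` has `Bᵀ v ≡ 0 (mod p)`.
Reducing `p d + 2 v` modulo `2p` into `[-p, p)` gives a vector `r`, and the covector with
`x · eᵢ = rᵢ / p` restricts to a characteristic covector of `L` of square `∑ rᵢ² / (p² dᵢ)`,
a sum of `n` terms each at most `1`.

If every row of `C` but the `i`-th vanishes mod `p`, then `p` divides the `i`-th row of `B`, so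
`L = ⊕_{j ≠ i} ℤ eⱼ ⊕ ℤ p eᵢ`, which is `ℤⁿ⁻¹ ⊕ ℤ(p²δ)` when `dᵢ = δ`. Otherwise some row
`i ≠ n` (so `dᵢ = 1`) is nonzero mod `p`, and `x` can be chosen with `rᵢ ∈ {0, 1}`. If `δ ≥ 2`,
the last term is at most `1 / δ ≤ 1 / 2`; if `δ = 1`, a second row `j` is nonzero mod `p`, and
`x` can moreover be chosen with `p ∤ vⱼ`, i.e. `|rⱼ| < p`. Either way two terms add up to less
than `1`, so the square is less than `n - 1`.
-/

open Matrix

def IsCharVec {n : ℕ} (Q : Matrix (Fin n) (Fin n) ℤ) (ξ : Fin n → ℤ) : Prop :=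
  ∀ y : Fin n → ℤ, ξ ⬝ᵥ y ≡ y ⬝ᵥ Q.mulVec y [ZMOD 2]

noncomputable def charSq {n : ℕ} (Q : Matrix (Fin n) (Fin n) ℤ) (ξ : Fin n → ℤ) : ℚ :=
  (fun i => (ξ i : ℚ)) ⬝ᵥ ((Q.map (Int.cast : ℤ → ℚ))⁻¹).mulVec (fun i => (ξ i : ℚ))

section IntEquivalent

variable {ι : Type*} [Fintype ι] [DecidableEq ι]

def IntEquivalent (Q Q' : Matrix ι ι ℤ) : Prop :=
  ∃ U : Matrix ι ι ℤ, IsUnit U.det ∧ Uᵀ * Q * U = Q'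

theorem IntEquivalent.trans {Q Q' Q'' : Matrix ι ι ℤ} (h : IntEquivalent Q Q')
    (h' : IntEquivalent Q' Q'') : IntEquivalent Q Q'' := by
  obtain ⟨U, hU, rfl⟩ := h
  obtain ⟨U', hU', rfl⟩ := h'
  refine ⟨U * U', by rw [det_mul]; exact hU.mul hU', ?_⟩
  simp only [transpose_mul, Matrix.mul_assoc]

theorem intEquivalent_transpose_mul_mul {V : Matrix ι ι ℤ} (hV : IsUnit V.det)
    (M : Matrix ι ι ℤ) : IntEquivalent (Vᵀ * M * V) M := by
  refine ⟨V⁻¹, isUnit_nonsing_inv_det V hV, ?_⟩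
  rw [transpose_nonsing_inv, Matrix.mul_assoc, Matrix.mul_assoc, mul_nonsing_inv _ hV,
    Matrix.mul_one, ← Matrix.mul_assoc, nonsing_inv_mul _ (isUnit_det_transpose V hV),
    Matrix.one_mul]

theorem intEquivalent_diagonal_comp_perm (g : ι → ℤ) (σ : Equiv.Perm ι) :
    IntEquivalent (diagonal g) (diagonal (g ∘ σ)) := by
  refine ⟨Equiv.Perm.permMatrix ℤ σ⁻¹, ?_, ?_⟩
  · rw [det_permutation]
    exact Int.isUnit_iff_natAbs_eq.mpr (by simp)
  · rw [Equiv.Perm.permMatrix, ← PEquiv.toMatrix_symm, ← Equiv.toPEquiv_symm,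
      PEquiv.toMatrix_toPEquiv_mul, PEquiv.mul_toMatrix_toPEquiv, submatrix_submatrix]
    exact submatrix_diagonal_equiv g σ

theorem exists_eq_diagonal_mul_of_row_dvd {p : ℤ} (hp : p ≠ 0) {B : Matrix ι ι ℤ}
    (hB : |B.det| = |p|) {i : ι} (hrow : ∀ j, p ∣ B i j) :
    ∃ V : Matrix ι ι ℤ, IsUnit V.det ∧ B = diagonal (Function.update 1 i p) * V := by
  set V := B.updateRow i fun j => B i j / p
  have hBV : B = diagonal (Function.update 1 i p) * V := by
    ext k j
    rcases eq_or_ne k i with rfl | hk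
    · simp [V, Int.mul_ediv_cancel' (hrow j)]
    · simp [V, hk]
  refine ⟨V, ?_, hBV⟩
  rw [hBV, det_mul, det_diagonal, Finset.prod_update_of_mem (Finset.mem_univ i)] at hB
  simp only [Pi.one_apply, Finset.prod_const_one, mul_one, abs_mul] at hB
  exact Int.isUnit_iff_abs_eq.mpr
    (mul_left_cancel₀ (abs_ne_zero.mpr hp) (hB.trans (mul_one _).symm))

theorem intEquivalent_of_row_dvd {p : ℤ} (hp : p ≠ 0) {B : Matrix ι ι ℤ}
    (hB : |B.det| = |p|) {i : ι} (hrow : ∀ j, p ∣ B i j) {d : ι → ℤ} {j : ι}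
    (hij : d i = d j) :
    IntEquivalent (Bᵀ * diagonal d * B) (diagonal (Function.update d j (p ^ 2 * d j))) := by
  obtain ⟨V, hV, rfl⟩ := exists_eq_diagonal_mul_of_row_dvd hp hB hrow
  have hconj : (diagonal (Function.update 1 i p) * V)ᵀ * diagonal d *
      (diagonal (Function.update 1 i p) * V) =
      Vᵀ * diagonal (Function.update d i (p ^ 2 * d i)) * V := by
    have hdiag : diagonal (Function.update 1 i p) * diagonal d * diagonal (Function.update 1 i p) =
        diagonal (Function.update d i (p ^ 2 * d i)) := by
      rw [diagonal_mul_diagonal, diagonal_mul_diagonal]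
      congr 1
      ext k
      rcases eq_or_ne k i with rfl | hk
      · simp only [Function.update_self]; ring
      · simp [hk]
    rw [transpose_mul, diagonal_transpose, ← hdiag]
    simp only [Matrix.mul_assoc]
  rw [hconj]
  refine (intEquivalent_transpose_mul_mul hV _).trans ?_
  convert intEquivalent_diagonal_comp_perm _ (Equiv.swap i j) using 2
  ext k
  rcases eq_or_ne k i with rfl | hki
  · rcases eq_or_ne k j with rfl | hkj
    · simp
    · simp [hkj, hkj.symm, hij]
  rcases eq_or_ne k j with rfl | hkj
  · simp [hij]
  · simp [hki, hkj, Equiv.swap_apply_of_ne_of_ne]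

end IntEquivalent

section Adjugate

variable {ι : Type*} [Fintype ι] [DecidableEq ι]

theorem isUnit_det_of_det_dvd_adjugate {A : Matrix ι ι ℤ} (hA : A.det ≠ 0)
    (h : ∀ i j, A.det ∣ A.adjugate i j) : IsUnit A.det := by
  choose C hC using h
  refine isUnit_det_of_right_inverse (B := of C) (smul_right_injective _ hA ?_)
  have hadj : A.adjugate = A.det • of C := by ext i j; exact hC i j
  have := A.mul_adjugate
  rwa [hadj, Matrix.mul_smul] at this

theorem exists_not_dvd_adjugate {p : ℤ} (hp : Prime p) {A : Matrix ι ι ℤ}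
    (hA : |A.det| = |p|) : ∃ i j, ¬ p ∣ A.adjugate i j := by
  by_contra! h
  have hdet : A.det ≠ 0 := by
    rw [← abs_ne_zero, hA, abs_ne_zero]; exact hp.ne_zero
  refine hp.not_isUnit (Int.isUnit_iff_abs_eq.mpr ?_)
  rw [← hA, ← Int.isUnit_iff_abs_eq]
  refine isUnit_det_of_det_dvd_adjugate hdet fun i j => ?_
  rw [← abs_dvd, hA, abs_dvd]
  exact h i j

theorem dvd_col_of_dvd_adjugate {p : ℤ} (hp : Prime p) {A : Matrix ι ι ℤ}
    (hA : |A.det| = |p|) {i : ι} (hrows : ∀ k, k ≠ i → ∀ j, p ∣ A.adjugate k j) (j : ι) :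
    p ∣ A j i := by
  obtain ⟨i', j', hij'⟩ := exists_not_dvd_adjugate hp hA
  obtain rfl : i' = i := by_contra fun h => hij' (hrows i' h j')
  have hdet : p ∣ A.det := by rw [← abs_dvd_abs, hA]
  have hsum : p ∣ ∑ k, A j k * A.adjugate k j' := by
    rw [← mul_apply, mul_adjugate, Matrix.smul_apply, smul_eq_mul]
    exact hdet.mul_right _
  have hrest : p ∣ ∑ k ∈ Finset.univ.erase i', A j k * A.adjugate k j' :=
    Finset.dvd_sum fun k hk => (hrows k (Finset.ne_of_mem_erase hk) j').mul_left _
  rw [← Finset.add_sum_erase _ _ (Finset.mem_univ i'), dvd_add_left hrest] at hsum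
  exact (hp.dvd_or_dvd hsum).resolve_right hij'

end Adjugate

section Congruences

variable {ι : Type*} [Fintype ι] [DecidableEq ι] {p : ℤ}

theorem exists_dvd_mul_sub (hp : Prime p) {c : ℤ} (hc : ¬ p ∣ c) (t : ℤ) : ∃ k, p ∣ c * k - t := by
  obtain ⟨a, b, hab⟩ := (hp.coprime_iff_not_dvd).mpr hc
  exact ⟨b * t, -(a * t), by linear_combination t * hab⟩

theorem dvd_mulVec_adjugate_mulVec {A : Matrix ι ι ℤ} (h : p ∣ A.det) (x : ι → ℤ) (l : ι) :
    p ∣ (A *ᵥ (A.adjugate *ᵥ x)) l := by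
  rw [mulVec_mulVec, mul_adjugate, smul_mulVec, one_mulVec, Pi.smul_apply, smul_eq_mul]
  exact h.mul_right _

theorem exists_dvd_mulVec_sub_not_dvd (hp : Prime p) {C : Matrix ι ι ℤ} {i₀ i₁ j₀ j₁ : ι}
    (h₀ : ¬ p ∣ C i₀ j₀) (h₁ : ¬ p ∣ C i₁ j₁) {t : ℤ} (ht : ¬ p ∣ t) :
    ∃ x, p ∣ (C *ᵥ x) i₀ - t ∧ ¬ p ∣ (C *ᵥ x) i₁ := by
  by_cases h : p ∣ C i₁ j₀
  · obtain ⟨k, hk⟩ := exists_dvd_mul_sub hp h₀ (t - C i₀ j₁)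
    have hx : ∀ i, (C *ᵥ (Pi.single j₀ k + Pi.single j₁ 1)) i = C i j₀ * k + C i j₁ := fun i => by
      simp [mulVec_add, mulVec_single, mul_comm]
    refine ⟨Pi.single j₀ k + Pi.single j₁ 1, ?_, ?_⟩ <;> rw [hx]
    · convert hk using 1; ring
    · rwa [dvd_add_right (h.mul_right k)]
  · obtain ⟨k, hk⟩ := exists_dvd_mul_sub hp h₀ t
    refine ⟨Pi.single j₀ k, by simpa [mulVec_single] using hk, ?_⟩
    have hkp : ¬ p ∣ k := fun hpk => ht ((dvd_sub_right (hpk.mul_left _)).mp hk)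
    simpa [mulVec_single] using hp.not_dvd_mul h hkp

end Congruences

theorem Finset.sum_le_card_sub_two_add {ι R : Type*} [Fintype ι] [Ring R] [PartialOrder R]
    [IsOrderedRing R] {f : ι → R} (hf : ∀ k, f k ≤ 1) {i j : ι} (hij : i ≠ j) :
    ∑ k, f k ≤ (Fintype.card ι - 2 : R) + f i + f j := by
  classical
  have hcard : ({i, j} : Finset ι).card = 2 := Finset.card_pair hij
  have hrest : ∑ k ∈ univ \ {i, j}, f k ≤ (Fintype.card ι - 2 : R) := by
    calc ∑ k ∈ univ \ {i, j}, f k ≤ (univ \ {i, j}).card • (1 : R) :=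
          Finset.sum_le_card_nsmul _ _ _ fun k _ => hf k
      _ = (Fintype.card ι - 2 : R) := by
          rw [nsmul_one, Finset.card_sdiff_of_subset (Finset.subset_univ _), Finset.card_univ,
            hcard, Nat.cast_sub (hcard ▸ Finset.card_le_univ _)]
          norm_num
  rw [← Finset.sum_sdiff (Finset.subset_univ {i, j}), Finset.sum_pair hij, add_assoc]
  exact add_le_add_left hrest _

theorem Int.bmod_two_mul_mem (x : ℤ) {p : ℕ} (hp : 0 < p) :
    -(p : ℤ) ≤ x.bmod (2 * p) ∧ x.bmod (2 * p) < p := by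
  have h₁ := Int.le_bmod (x := x) (m := 2 * p) (by omega)
  have h₂ := Int.bmod_lt (x := x) (m := 2 * p) (by omega)
  push_cast at h₁ h₂
  omega

theorem Int.bmod_add_two_mul_of_dvd {p : ℕ} (hp : 2 ≤ p) {v : ℤ} (hv : (p : ℤ) ∣ v + p / 2) :
    ((p : ℤ) + 2 * v).bmod (2 * p) = (p : ℤ) % 2 := by
  obtain ⟨c, hc⟩ := hv
  rw [Int.bmod_eq_iff (by omega)]
  push_cast
  refine ⟨by omega, by omega, -c, ?_⟩
  linear_combination (-2) * hc + Int.emod_add_mul_ediv (p : ℤ) 2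

theorem Int.bmod_add_two_mul_ne_neg {p : ℕ} (hp : 0 < p) {v : ℤ} (hv : ¬ (p : ℤ) ∣ v) :
    ((p : ℤ) + 2 * v).bmod (2 * p) ≠ -p := by
  intro h
  have := (Int.bmod_eq_iff (by omega)).mp h
  obtain ⟨c, hc⟩ := this.2.2
  exact hv ⟨-c - 1, by push_cast at hc; linarith⟩

theorem Int.sq_bmod_add_two_mul_le {p : ℕ} (hp : 0 < p) {v : ℤ} (hv : ¬ (p : ℤ) ∣ v) :
    (((p : ℤ) + 2 * v).bmod (2 * p)) ^ 2 ≤ ((p : ℤ) - 1) ^ 2 := by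
  have hne := Int.bmod_add_two_mul_ne_neg hp hv
  have hmem := Int.bmod_two_mul_mem ((p : ℤ) + 2 * v) hp
  exact sq_le_sq' (by omega) (by omega)

theorem Int.not_dvd_neg_half {p : ℕ} (hp : 2 ≤ p) : ¬ (p : ℤ) ∣ -((p : ℤ) / 2) := by
  rw [dvd_neg]
  intro h
  have := Int.le_of_dvd (by omega) h
  omega

section CharVec

variable {n : ℕ}

theorem isCharVec_diagonal_self (d : Fin n → ℤ) : IsCharVec (diagonal d) d := by
  intro y
  simp only [dotProduct, mulVec_diagonal]
  refine Int.ModEq.sum fun i _ => Int.modEq_iff_dvd.mpr ?_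
  have hev : (2 : ℤ) ∣ y i * (y i - 1) := (Int.even_mul_pred_self (y i)).two_dvd
  rw [show y i * (d i * y i) - d i * y i = d i * (y i * (y i - 1)) by ring]
  exact hev.mul_left _

theorem IsCharVec.transpose_mulVec {Q : Matrix (Fin n) (Fin n) ℤ} {ξ : Fin n → ℤ}
    (h : IsCharVec Q ξ) (B : Matrix (Fin n) (Fin n) ℤ) : IsCharVec (Bᵀ * Q * B) (Bᵀ *ᵥ ξ) := by
  intro y
  rw [mulVec_transpose, ← dotProduct_mulVec, ← mulVec_mulVec, ← mulVec_mulVec, dotProduct_mulVec y,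
    vecMul_transpose]
  exact h (B *ᵥ y)

theorem IsCharVec.add_two_smul {Q : Matrix (Fin n) (Fin n) ℤ} {ξ : Fin n → ℤ}
    (h : IsCharVec Q ξ) (m : Fin n → ℤ) : IsCharVec Q (ξ + (2 : ℤ) • m) := by
  intro y
  rw [add_dotProduct, smul_dotProduct, smul_eq_mul, Int.ModEq, Int.add_mul_emod_self_left]
  exact h y

end CharVec

theorem Matrix.transpose_mulVec_dotProduct_inv_mulVec {ι K : Type*} [Fintype ι] [DecidableEq ι]
    [Field K] {A : Matrix ι ι K} (hA : IsUnit A.det) {e : ι → K} (he : ∀ i, e i ≠ 0)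
    (η : ι → K) :
    (Aᵀ *ᵥ η) ⬝ᵥ (Aᵀ * diagonal e * A)⁻¹ *ᵥ (Aᵀ *ᵥ η) = ∑ i, η i ^ 2 / e i := by
  have hAt : IsUnit Aᵀ.det := isUnit_det_transpose A hA
  have hD : (diagonal e)⁻¹ = diagonal fun i => (e i)⁻¹ :=
    inv_eq_right_inv (by rw [diagonal_mul_diagonal]; simp [he])
  rw [mul_inv_rev, mul_inv_rev, hD, mulVec_mulVec, Matrix.mul_assoc, Matrix.mul_assoc,
    nonsing_inv_mul _ hAt, Matrix.mul_one, ← mulVec_mulVec, dotProduct_mulVec, mulVec_transpose,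
    vecMul_vecMul, mul_nonsing_inv _ hA, vecMul_one]
  simp only [dotProduct, mulVec_diagonal]
  exact Finset.sum_congr rfl fun i _ => by ring

theorem charSq_transpose_mul_diagonal_mul {n : ℕ} {B : Matrix (Fin n) (Fin n) ℤ} (hB : B.det ≠ 0)
    {d : Fin n → ℤ} (hd : ∀ i, d i ≠ 0) {ξ : Fin n → ℤ} {η : Fin n → ℚ}
    (hξ : (B.map (Int.cast : ℤ → ℚ))ᵀ *ᵥ η = fun i => (ξ i : ℚ)) :
    charSq (Bᵀ * diagonal d * B) ξ = ∑ i, η i ^ 2 / d i := by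
  have hmap : (Bᵀ * diagonal d * B).map (Int.cast : ℤ → ℚ) =
      (B.map Int.cast)ᵀ * diagonal (fun i => (d i : ℚ)) * B.map Int.cast := by
    rw [show (Int.cast : ℤ → ℚ) = ⇑(Int.castRingHom ℚ) from rfl, Matrix.map_mul, Matrix.map_mul,
      transpose_map, diagonal_map (map_zero _)]
  have hA : IsUnit (B.map (Int.cast : ℤ → ℚ)).det := by
    rw [isUnit_iff_ne_zero, ← Int.cast_det]
    exact_mod_cast hB
  rw [charSq, hmap, ← hξ]
  exact transpose_mulVec_dotProduct_inv_mulVec hA (fun i => by exact_mod_cast hd i) η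

/-- `(x · eᵢ)² / dᵢ` for the covector `x` with `x · eᵢ = rᵢ / p`, where `r` is `p d + 2 v`
reduced modulo `2p` into `[-p, p)`. -/
def coordSq {ι : Type*} (p : ℕ) (d v : ι → ℤ) (i : ι) : ℚ :=
  (((p : ℤ) * d i + 2 * v i).bmod (2 * p) : ℚ) ^ 2 / (p ^ 2 * d i)

theorem exists_isCharVec_charSq_eq_sum {n p : ℕ} (hp : 0 < p) {B : Matrix (Fin n) (Fin n) ℤ}
    (hB : B.det ≠ 0) {d : Fin n → ℤ} (hd : ∀ i, d i ≠ 0) {v : Fin n → ℤ}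
    (hv : ∀ l, (p : ℤ) ∣ (Bᵀ *ᵥ v) l) :
    ∃ ξ, IsCharVec (Bᵀ * diagonal d * B) ξ ∧
      charSq (Bᵀ * diagonal d * B) ξ = ∑ i, coordSq p d v i := by
  set r : Fin n → ℤ := fun i => ((p : ℤ) * d i + 2 * v i).bmod (2 * p)
  obtain ⟨w, hw⟩ : ∃ w : Fin n → ℤ, r = (p : ℤ) • d + (2 : ℤ) • v + (2 * p : ℤ) • w := by
    choose w hw using fun i =>
      (Int.ModEq.dvd (Int.bmod_emod (x := (p : ℤ) * d i + 2 * v i) (m := 2 * p)).symm)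
    refine ⟨w, funext fun i => ?_⟩
    show r i = p * d i + 2 * v i + 2 * p * w i
    push_cast at hw
    linarith [hw i]
  choose z hz using hv
  set ξ := Bᵀ *ᵥ d + (2 : ℤ) • (z + Bᵀ *ᵥ w)
  have hBr : ∀ l, (Bᵀ *ᵥ r) l = p * ξ l := fun l => by
    rw [hw, mulVec_add, mulVec_add, mulVec_smul, mulVec_smul, mulVec_smul]
    show p * (Bᵀ *ᵥ d) l + 2 * (Bᵀ *ᵥ v) l + 2 * p * (Bᵀ *ᵥ w) l =
      p * ((Bᵀ *ᵥ d) l + 2 * (z l + (Bᵀ *ᵥ w) l))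
    rw [hz]
    ring
  refine ⟨ξ, (isCharVec_diagonal_self d).transpose_mulVec B |>.add_two_smul _, ?_⟩
  rw [charSq_transpose_mul_diagonal_mul hB hd (η := fun i => (r i : ℚ) / p)]
  · refine Finset.sum_congr rfl fun i _ => ?_
    rw [coordSq, div_pow, div_div]
  · ext l
    have hpq : (p : ℚ) ≠ 0 := by exact_mod_cast hp.ne'
    have := congrArg (Int.cast : ℤ → ℚ) (hBr l)
    simp only [mulVec, dotProduct, transpose_apply, map_apply, Int.cast_sum, Int.cast_mul] at this ⊢
    simp only [mul_div_assoc', ← Finset.sum_div, this, Int.cast_natCast]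
    field_simp

section CoordSq

variable {ι : Type*} {p : ℕ} {d : ι → ℤ} {i : ι}

theorem coordSq_le_inv (hp : 0 < p) (v : ι → ℤ) (hd : 0 < d i) :
    coordSq p d v i ≤ 1 / d i := by
  obtain ⟨h₁, h₂⟩ := Int.bmod_two_mul_mem ((p : ℤ) * d i + 2 * v i) hp
  have hsq : (((p : ℤ) * d i + 2 * v i).bmod (2 * p) : ℚ) ^ 2 ≤ (p : ℚ) ^ 2 := by
    exact_mod_cast sq_le_sq' h₁ h₂.le
  have hdq : (0 : ℚ) < d i := by exact_mod_cast hd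
  rw [coordSq, div_le_div_iff₀ (by positivity) hdq]
  nlinarith

theorem coordSq_of_eq_one (v : ι → ℤ) (hd : d i = 1) :
    coordSq p d v i = (((p : ℤ) + 2 * v i).bmod (2 * p) : ℚ) ^ 2 / p ^ 2 := by
  simp [coordSq, hd]

theorem coordSq_le_of_dvd (hp : 2 ≤ p) {v : ι → ℤ} (hd : d i = 1)
    (hv : (p : ℤ) ∣ v i + p / 2) : coordSq p d v i ≤ 1 / p ^ 2 := by
  rw [coordSq_of_eq_one v hd, Int.bmod_add_two_mul_of_dvd hp hv]
  gcongr
  rcases Int.emod_two_eq_zero_or_one (p : ℤ) with h | h <;> simp [h]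

theorem coordSq_le_of_not_dvd (hp : 0 < p) {v : ι → ℤ} (hd : d i = 1) (hv : ¬ (p : ℤ) ∣ v i) :
    coordSq p d v i ≤ ((p : ℚ) - 1) ^ 2 / p ^ 2 := by
  have h : ((((p : ℤ) + 2 * v i).bmod (2 * p) : ℤ) : ℚ) ^ 2 ≤ (((p : ℤ) - 1 : ℤ) : ℚ) ^ 2 := by
    exact_mod_cast Int.sq_bmod_add_two_mul_le hp hv
  push_cast at h
  rw [coordSq_of_eq_one v hd]
  exact div_le_div_of_nonneg_right h (by positivity)

end CoordSq

section CharSqLt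

variable {n p : ℕ} {B : Matrix (Fin n) (Fin n) ℤ} {d : Fin n → ℤ}

theorem exists_isCharVec_charSq_lt (hp : 0 < p) (hB : |B.det| = p) (hd : ∀ i, 0 < d i)
    (x : Fin n → ℤ) {i j : Fin n} (hij : i ≠ j)
    (hsmall : coordSq p d (Bᵀ.adjugate *ᵥ x) i + coordSq p d (Bᵀ.adjugate *ᵥ x) j < 1) :
    ∃ ξ, IsCharVec (Bᵀ * diagonal d * B) ξ ∧ charSq (Bᵀ * diagonal d * B) ξ < n - 1 := by
  have hdet : B.det ≠ 0 := by rw [← abs_ne_zero, hB]; exact_mod_cast hp.ne'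
  have hv := dvd_mulVec_adjugate_mulVec (p := (p : ℤ)) (A := Bᵀ)
    (by rw [det_transpose, ← dvd_abs, hB]) x
  obtain ⟨ξ, hξ, hsq⟩ := exists_isCharVec_charSq_eq_sum hp hdet (fun k => (hd k).ne') hv
  refine ⟨ξ, hξ, ?_⟩
  have hle : ∀ k, coordSq p d (Bᵀ.adjugate *ᵥ x) k ≤ 1 := fun k =>
    (coordSq_le_inv hp _ (hd k)).trans
      (div_le_one_of_le₀ (by exact_mod_cast hd k) (by exact_mod_cast (hd k).le))
  have := Finset.sum_le_card_sub_two_add hle hij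
  rw [Fintype.card_fin] at this
  rw [hsq]
  linarith

theorem exists_isCharVec_charSq_lt_of_two_le (hp : p.Prime) (hB : |B.det| = p) (hd : ∀ i, 0 < d i)
    {i j k : Fin n} (hij : i ≠ j) (hdi : d i = 1) (hdj : 2 ≤ d j)
    (hik : ¬ (p : ℤ) ∣ Bᵀ.adjugate i k) :
    ∃ ξ, IsCharVec (Bᵀ * diagonal d * B) ξ ∧ charSq (Bᵀ * diagonal d * B) ξ < n - 1 := by
  obtain ⟨c, hc⟩ := exists_dvd_mul_sub (Nat.prime_iff_prime_int.mp hp) hik (-((p : ℤ) / 2))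
  refine exists_isCharVec_charSq_lt hp.pos hB hd (Pi.single k c) hij ?_
  have hi := coordSq_le_of_dvd hp.two_le hdi (v := Bᵀ.adjugate *ᵥ Pi.single k c)
    (by simpa [mulVec_single] using hc)
  have hj := coordSq_le_inv hp.pos (Bᵀ.adjugate *ᵥ Pi.single k c) (hd j)
  have hp4 : (1 : ℚ) / p ^ 2 ≤ 1 / 4 := by
    gcongr; exact_mod_cast (by nlinarith [hp.two_le] : 4 ≤ p ^ 2)
  have hd2 : (1 : ℚ) / d j ≤ 1 / 2 := by gcongr; exact_mod_cast hdj
  linarith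

theorem exists_isCharVec_charSq_lt_of_eq_one (hp : p.Prime) (hB : |B.det| = p)
    (hd : ∀ i, 0 < d i) {i j k l : Fin n} (hij : i ≠ j) (hdi : d i = 1) (hdj : d j = 1)
    (hik : ¬ (p : ℤ) ∣ Bᵀ.adjugate i k) (hjl : ¬ (p : ℤ) ∣ Bᵀ.adjugate j l) :
    ∃ ξ, IsCharVec (Bᵀ * diagonal d * B) ξ ∧ charSq (Bᵀ * diagonal d * B) ξ < n - 1 := by
  obtain ⟨x, hxi, hxj⟩ := exists_dvd_mulVec_sub_not_dvd (Nat.prime_iff_prime_int.mp hp) hik hjl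
    (Int.not_dvd_neg_half hp.two_le)
  refine exists_isCharVec_charSq_lt hp.pos hB hd x hij ?_
  have hi := coordSq_le_of_dvd hp.two_le hdi (by simpa using hxi)
  have hj := coordSq_le_of_not_dvd hp.pos hdj hxj
  have hp2 : (2 : ℚ) ≤ p := by exact_mod_cast hp.two_le
  calc _ ≤ 1 / (p : ℚ) ^ 2 + ((p : ℚ) - 1) ^ 2 / p ^ 2 := add_le_add hi hj
    _ < 1 := by rw [← add_div, div_lt_one (by positivity)]; nlinarith

end CharSqLt

/-- A sublattice of `ℤⁿ⁻¹ ⊕ ℤ(δ)` of index `p` is presented by an integer basis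
matrix `B` with `|det B| = p`; its Gram matrix is `Q = Bᵀ G B` where
`G = diag(1,…,1,δ)`.  Either `L ≅ ℤⁿ⁻¹ ⊕ ℤ(p²δ)` or `L` has a characteristic
covector of square `< n - 1`. -/
theorem stmt_8 (n : ℕ) (p : ℕ) (hp : p.Prime) (δ : ℕ) (hδ : 0 < δ)
    (B : Matrix (Fin n) (Fin n) ℤ) (hB : |B.det| = (p : ℤ))
    (Q : Matrix (Fin n) (Fin n) ℤ)
    (hQ : Q = Bᵀ * Matrix.diagonal (fun i : Fin n => if (i : ℕ) = n - 1 then (δ : ℤ) else 1) * B) :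
    (∃ U : Matrix (Fin n) (Fin n) ℤ, IsUnit U.det ∧
        Uᵀ * Q * U =
          Matrix.diagonal (fun i : Fin n => if (i : ℕ) = n - 1 then ((p : ℤ) ^ 2 * δ) else 1)) ∨
    (∃ ξ : Fin n → ℤ, IsCharVec Q ξ ∧ charSq Q ξ < (n : ℚ) - 1) := by
  subst hQ
  set d : Fin n → ℤ := fun i => if (i : ℕ) = n - 1 then (δ : ℤ) else 1
  have hd : ∀ i, 0 < d i := fun i => by simp only [d]; split_ifs <;> omega
  have hpZ : Prime (p : ℤ) := Nat.prime_iff_prime_int.mp hp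
  have hBp : |B.det| = |(p : ℤ)| := by rw [hB, Nat.abs_cast]
  have hBt : |Bᵀ.det| = |(p : ℤ)| := by rwa [det_transpose]
  have hn : 0 < n := (exists_not_dvd_adjugate hpZ hBt).choose.pos
  let last : Fin n := ⟨n - 1, by omega⟩
  have htarget : (fun i : Fin n => if (i : ℕ) = n - 1 then ((p : ℤ) ^ 2 * δ) else 1) =
      Function.update d last ((p : ℤ) ^ 2 * d last) := by
    funext k
    by_cases hk : (k : ℕ) = n - 1 <;> simp [Function.update_apply, Fin.ext_iff, d, last, hk]
  rw [htarget]
  by_cases hrows : ∀ k, k ≠ last → ∀ j, (p : ℤ) ∣ Bᵀ.adjugate k j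
  · exact Or.inl (intEquivalent_of_row_dvd hpZ.ne_zero hBp
      (dvd_col_of_dvd_adjugate hpZ hBt hrows) rfl)
  push Not at hrows
  obtain ⟨i₀, hi₀, j₀, hc₀⟩ := hrows
  have hd₀ : d i₀ = 1 := if_neg fun h => hi₀ (Fin.ext h)
  obtain rfl | hδ2 : δ = 1 ∨ 2 ≤ δ := by omega
  · have hd1 : ∀ i, d i = 1 := fun i => by simp [d]
    by_cases hrows' : ∀ k, k ≠ i₀ → ∀ j, (p : ℤ) ∣ Bᵀ.adjugate k j
    · exact Or.inl (intEquivalent_of_row_dvd hpZ.ne_zero hBp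
        (dvd_col_of_dvd_adjugate hpZ hBt hrows') (by rw [hd1, hd1]))
    push Not at hrows'
    obtain ⟨i₁, hi₁, j₁, hc₁⟩ := hrows'
    exact Or.inr (exists_isCharVec_charSq_lt_of_eq_one hp hB hd hi₁.symm hd₀ (hd1 i₁) hc₀ hc₁)
  · exact Or.inr (exists_isCharVec_charSq_lt_of_two_le hp hB hd hi₀ hd₀
      (by simpa [d, last] using hδ2) hc₀)
end

section
/- Let L be a nondegenerate integral lattice of determinant δ, and let ξ₁, ξ₂ be two characteristic covectors of L. Then ξ₁² − ξ₂² is an integer multiple of 4/δ; if δ is odd, it is a multiple of 8/δ. -/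
open Matrix

lemma cast_dm {n : ℕ} (A : Matrix (Fin n) (Fin n) ℤ) (v w : Fin n → ℤ) :
    ((v ⬝ᵥ A.mulVec w : ℤ) : ℚ) =
      (fun i => (v i : ℚ)) ⬝ᵥ ((A.map (Int.cast : ℤ → ℚ)).mulVec (fun i => (w i : ℚ))) := by
  simp only [dotProduct, Matrix.mulVec, Matrix.map_apply]
  push_cast
  ring

lemma cross {n : ℕ} (A : Matrix (Fin n) (Fin n) ℤ) (hA : Aᵀ = A) (v w : Fin n → ℤ) :
    v ⬝ᵥ A.mulVec w = w ⬝ᵥ A.mulVec v := by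
  rw [Matrix.dotProduct_mulVec, ← Matrix.mulVec_transpose, hA, dotProduct_comm]

lemma charSq_eq {n : ℕ} (Q : Matrix (Fin n) (Fin n) ℤ) (δ : ℤ) (hdet : Q.det = δ)
    (ξ : Fin n → ℤ) :
    charSq Q ξ = ((ξ ⬝ᵥ Q.adjugate.mulVec ξ : ℤ) : ℚ) / δ := by
  have hd : (Q.map (Int.cast : ℤ → ℚ)).det = (δ : ℚ) := by
    rw [← hdet]
    have := RingHom.map_det (Int.castRingHom ℚ) Q
    simpa [RingHom.mapMatrix_apply] using this.symm
  have hadj : (Q.map (Int.cast : ℤ → ℚ)).adjugate = Q.adjugate.map (Int.cast : ℤ → ℚ) := by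
    have := RingHom.map_adjugate (Int.castRingHom ℚ) Q
    simpa [RingHom.mapMatrix_apply] using this.symm
  unfold charSq
  rw [Matrix.inv_def, hd, hadj, Ring.inverse_eq_inv', Matrix.smul_mulVec,
    dotProduct_smul, smul_eq_mul, cast_dm]
  ring

theorem stmt_12 (n : ℕ) (Q : Matrix (Fin n) (Fin n) ℤ) (hsym : Q.IsSymm)
    (δ : ℤ) (hδ : δ ≠ 0) (hdet : Q.det = δ)
    (ξ₁ ξ₂ : Fin n → ℤ) (h₁ : IsCharVec Q ξ₁) (h₂ : IsCharVec Q ξ₂) :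
    (∃ m : ℤ, charSq Q ξ₁ - charSq Q ξ₂ = m * (4 / (δ : ℚ))) ∧
    (Odd δ → ∃ m : ℤ, charSq Q ξ₁ - charSq Q ξ₂ = m * (8 / (δ : ℚ))) := by
  set A := Q.adjugate with hA
  have hAsym : Aᵀ = A := by
    rw [hA, Matrix.adjugate_transpose, hsym.eq]
  -- ξ₁ ≡ ξ₂ mod 2, componentwise
  have hdvd : ∀ i, 2 ∣ ξ₁ i - ξ₂ i := by
    intro i
    have h := ((h₁ (Pi.single i 1)).trans (h₂ (Pi.single i 1)).symm).dvd
    rw [dotProduct_single, dotProduct_single, mul_one, mul_one] at h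
    exact dvd_sub_comm.mp h
  choose w hw using fun i => hdvd i
  have hξ : ξ₁ = ξ₂ + (2 : ℤ) • w := by
    funext i
    have := hw i
    simp [Pi.add_apply, Pi.smul_apply, smul_eq_mul]
    omega
  -- integer expansion
  have hcross : ξ₂ ⬝ᵥ A.mulVec w = w ⬝ᵥ A.mulVec ξ₂ := cross A hAsym ξ₂ w
  have expand : ξ₁ ⬝ᵥ A.mulVec ξ₁ =
      ξ₂ ⬝ᵥ A.mulVec ξ₂ + 4 * (w ⬝ᵥ A.mulVec ξ₂ + w ⬝ᵥ A.mulVec w) := by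
    rw [hξ]
    simp only [Matrix.mulVec_add, dotProduct_add, add_dotProduct,
      Matrix.mulVec_smul, dotProduct_smul, smul_dotProduct, smul_eq_mul]
    rw [hcross]
    ring
  set N : ℤ := w ⬝ᵥ A.mulVec ξ₂ + w ⬝ᵥ A.mulVec w with hN
  have hdiff : charSq Q ξ₁ - charSq Q ξ₂ = (N : ℚ) * (4 / (δ : ℚ)) := by
    rw [charSq_eq Q δ hdet ξ₁, charSq_eq Q δ hdet ξ₂, expand]
    push_cast
    have : (δ : ℚ) ≠ 0 := Int.cast_ne_zero.mpr hδ
    field_simp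
    ring
  refine ⟨⟨N, hdiff⟩, fun hodd => ?_⟩
  -- N is even
  have key : w ⬝ᵥ A.mulVec ξ₂ ≡ δ * (w ⬝ᵥ A.mulVec w) [ZMOD 2] := by
    have h := (h₂ (A.mulVec w)).symm
    have e1 : ξ₂ ⬝ᵥ A.mulVec w = w ⬝ᵥ A.mulVec ξ₂ := hcross
    have e2 : (A.mulVec w) ⬝ᵥ Q.mulVec (A.mulVec w) = δ * (w ⬝ᵥ A.mulVec w) := by
      rw [Matrix.mulVec_mulVec, hA, Matrix.mul_adjugate, hdet, Matrix.smul_mulVec,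
        Matrix.one_mulVec, dotProduct_smul, smul_eq_mul,
        dotProduct_comm]
    rw [e1, e2] at h
    exact h.symm
  have hδ1 : δ ≡ 1 [ZMOD 2] := by
    unfold Int.ModEq
    simp [Int.odd_iff.mp hodd]
  have hNeven : 2 ∣ N := by
    have : N ≡ 1 * (w ⬝ᵥ A.mulVec w) + w ⬝ᵥ A.mulVec w [ZMOD 2] :=
      (key.trans (hδ1.mul_right _)).add_right _
    have h2 : N ≡ 2 * (w ⬝ᵥ A.mulVec w) [ZMOD 2] := by
      rw [one_mul] at this; rw [two_mul]; exact this
    have h0 : N ≡ 0 [ZMOD 2] := h2.trans (Int.modEq_zero_iff_dvd.mpr ⟨_, rfl⟩)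
    exact Int.modEq_zero_iff_dvd.mp h0
  obtain ⟨k, hk⟩ := hNeven
  refine ⟨k, ?_⟩
  rw [hdiff, hk]
  push_cast
  ring
end
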